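/- arXiv:1306.1242 — 2 statements merged into one kernel-verified Lean document; each statement's English description precedes it below -/
import Mathlib

section
/- For every n ≥ 1 there exist semisimple (diagonalizable) elements x, y ∈ GSO_{2n}(ℂ) with equal multipliers ν(x) = ν(y) that are conjugate by an element of GL_{2n}(ℂ) but are not conjugate by any element of GSO_{2n}(ℂ). -/
open Matrix

noncomputable section

/-- 2n×2n matrices, indexed by `Fin n ⊕ Fin n`. -/
abbrev Mat (n : ℕ) (k : Type*) := Matrix (Fin n ⊕ Fin n) (Fin n ⊕ Fin n) k

/-- The standard split symmetric form matrix `Q_{2n} = [[0, 1], [1, 0]]`. -/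
def Qmat (n : ℕ) : Mat n ℂ := fromBlocks 0 1 1 0

/-- `A ∈ GO_{2n}(ℂ)` with multiplier `ν`. -/
def inGO (n : ℕ) (A : Mat n ℂ) (ν : ℂ) : Prop :=
  IsUnit A.det ∧ ν ≠ 0 ∧ Aᵀ * Qmat n * A = ν • Qmat n

/-- `A ∈ GSO_{2n}(ℂ)` with multiplier `ν`: in `GO_{2n}` and `det A = ν ^ n`. -/
def inGSO (n : ℕ) (A : Mat n ℂ) (ν : ℂ) : Prop :=
  inGO n A ν ∧ A.det = ν ^ n

/-- A square matrix is semisimple (diagonalizable). -/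
def IsDiagonalizable {m : Type*} [Fintype m] [DecidableEq m] (A : Matrix m m ℂ) : Prop :=
  ∃ (P : Matrix m m ℂ) (d : m → ℂ), IsUnit P.det ∧ A = P * Matrix.diagonal d * P⁻¹

/-! Let `x` be a diagonal element of `GSO_{2n}` with `2n` distinct eigenvalues, and let `P` be the
permutation matrix of the transposition exchanging the first basis vectors of the two halves. `P`
preserves the form `Q`, but `det P = -1`. If `g ∈ GO_{2n}` with multiplier `ν` conjugates `x` to
`P x P⁻¹`, then `P⁻¹ g` centralizes the regular element `x`, so it is diagonal; diagonal elements
of `GO_{2n}` pair their entries to the multiplier and hence lie in `GSO_{2n}`. Therefore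
`det g = det P · ν ^ n = -ν ^ n ≠ ν ^ n`. -/

open Equiv

namespace Matrix

lemma inv_permMatrix {m R : Type*} [Fintype m] [DecidableEq m] [CommRing R] (σ : Perm m) :
    (σ.permMatrix R)⁻¹ = σ⁻¹.permMatrix R :=
  inv_eq_left_inv (by rw [← permMatrix_mul, mul_inv_cancel, permMatrix_one])

lemma eq_diagonal_of_commute_diagonal {m R : Type*} [Fintype m] [DecidableEq m] [CommRing R]
    [NoZeroDivisors R] {A : Matrix m m R} {d : m → R} (hd : Function.Injective d)
    (h : Commute A (diagonal d)) : A = diagonal fun u => A u u := by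
  ext u v
  rcases eq_or_ne u v with rfl | huv
  · simp
  · have hentry : A u v * (d v - d u) = 0 := by
      have := congrFun (congrFun h.eq u) v
      rw [mul_diagonal, diagonal_mul] at this
      linear_combination this
    simpa [diagonal_apply_ne _ huv, sub_eq_zero, hd.ne huv.symm] using hentry

end Matrix

variable {n : ℕ}

def swapHalves (n : ℕ) : Perm (Fin n ⊕ Fin n) := sumComm (Fin n) (Fin n)

lemma Qmat_apply (u v : Fin n ⊕ Fin n) : Qmat n u v = if swapHalves n u = v then 1 else 0 := by
  rcases u with i | i <;> rcases v with j | j <;>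
    simp [Qmat, swapHalves, one_apply]

lemma Qmat_eq_permMatrix : Qmat n = (swapHalves n).permMatrix ℂ := by
  ext u v
  simp [Qmat_apply, PEquiv.toMatrix_apply]

lemma inGO.mul {A B : Mat n ℂ} {a b : ℂ} (hA : inGO n A a) (hB : inGO n B b) :
    inGO n (A * B) (a * b) := by
  refine ⟨by rw [det_mul]; exact hA.1.mul hB.1, mul_ne_zero hA.2.1 hB.2.1, ?_⟩
  calc (A * B)ᵀ * Qmat n * (A * B) = Bᵀ * (Aᵀ * Qmat n * A) * B := by
        simp only [transpose_mul, Matrix.mul_assoc]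
    _ = (a * b) • Qmat n := by
        rw [hA.2.2, Matrix.mul_smul, Matrix.smul_mul, hB.2.2, smul_smul]

lemma inGO_permMatrix {σ : Perm (Fin n ⊕ Fin n)} (hσ : Commute σ (swapHalves n)) :
    inGO n (σ.permMatrix ℂ) 1 := by
  refine ⟨by simp, one_ne_zero, ?_⟩
  rw [Qmat_eq_permMatrix, transpose_permMatrix, ← permMatrix_mul, ← permMatrix_mul,
    ← mul_assoc, hσ.eq, mul_inv_cancel_right, one_smul]

lemma transpose_diagonal_mul_Qmat_mul_diagonal_eq_smul_iff {c : Fin n ⊕ Fin n → ℂ} {ν : ℂ} :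
    (diagonal c)ᵀ * Qmat n * diagonal c = ν • Qmat n ↔ ∀ u, c u * c (swapHalves n u) = ν := by
  simp only [← Matrix.ext_iff, diagonal_transpose, mul_diagonal, diagonal_mul, Matrix.smul_apply,
    Qmat_apply, smul_eq_mul]
  refine ⟨fun h u => by simpa using h u (swapHalves n u), fun h u v => ?_⟩
  split_ifs with huv
  · rw [← huv, mul_one, mul_one, h]
  · simp

lemma prod_eq_pow_of_mul_swapHalves {c : Fin n ⊕ Fin n → ℂ} {ν : ℂ}
    (hc : ∀ u, c u * c (swapHalves n u) = ν) : ∏ u, c u = ν ^ n := by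
  rw [Fintype.prod_sum_type, ← Finset.prod_mul_distrib]
  exact (Finset.prod_eq_pow_card (s := .univ) fun i _ => hc (.inl i)).trans (by simp)

lemma inGSO_diagonal {c : Fin n ⊕ Fin n → ℂ} {ν : ℂ} (hν : ν ≠ 0)
    (hc : ∀ u, c u * c (swapHalves n u) = ν) : inGSO n (diagonal c) ν := by
  have hdet : (diagonal c).det = ν ^ n := by rw [det_diagonal, prod_eq_pow_of_mul_swapHalves hc]
  exact ⟨⟨by simp [hdet, hν], hν, transpose_diagonal_mul_Qmat_mul_diagonal_eq_smul_iff.2 hc⟩, hdet⟩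

lemma inGO.inGSO_of_diagonal {c : Fin n ⊕ Fin n → ℂ} {ν : ℂ} (h : inGO n (diagonal c) ν) :
    inGSO n (diagonal c) ν :=
  inGSO_diagonal h.2.1 (transpose_diagonal_mul_Qmat_mul_diagonal_eq_smul_iff.1 h.2.2)

lemma det_eq_sign_mul_pow_of_conj {σ : Perm (Fin n ⊕ Fin n)} (hσ : Commute σ (swapHalves n))
    {d : Fin n ⊕ Fin n → ℂ} (hd : Function.Injective d) {g : Mat n ℂ} {ν : ℂ}
    (hg : inGO n g ν)
    (hconj : g * diagonal d * g⁻¹ = σ.permMatrix ℂ * diagonal d * (σ.permMatrix ℂ)⁻¹) :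
    g.det = Perm.sign σ * ν ^ n := by
  set P := σ.permMatrix ℂ
  have hP : IsUnit P.det := (inGO_permMatrix hσ).1
  have hcomm : Commute (P⁻¹ * g) (diagonal d) := calc
    P⁻¹ * g * diagonal d = P⁻¹ * (g * diagonal d * g⁻¹) * g := by
      rw [Matrix.mul_assoc P⁻¹ _ g, nonsing_inv_mul_cancel_right _ _ hg.1, Matrix.mul_assoc]
    _ = diagonal d * (P⁻¹ * g) := by
      rw [hconj, Matrix.mul_assoc P, nonsing_inv_mul_cancel_left _ _ hP, Matrix.mul_assoc]
  have hGO : inGO n (P⁻¹ * g) ν := by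
    simpa [P, inv_permMatrix] using (inGO_permMatrix hσ.inv_left).mul hg
  have hdet : (P⁻¹ * g).det = ν ^ n := by
    rw [eq_diagonal_of_commute_diagonal hd hcomm] at hGO ⊢
    exact hGO.inGSO_of_diagonal.2
  rw [← mul_nonsing_inv_cancel_left P g hP, det_mul, hdet, det_permutation]

def regularTorusEntries (n : ℕ) : Fin n ⊕ Fin n → ℂ :=
  Sum.elim (fun i => ((i + 2 : ℕ) : ℂ)) (fun i => ((i + 2 : ℕ) : ℂ)⁻¹)

lemma regularTorusEntries_injective : Function.Injective (regularTorusEntries n) := by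
  have hne (k : ℕ) : ((k + 2 : ℕ) : ℂ) ≠ 0 := Nat.cast_ne_zero.2 (by omega)
  rintro (i | i) (j | j) h <;> simp only [regularTorusEntries, Sum.elim_inl, Sum.elim_inr] at h
  · exact congrArg Sum.inl (Fin.ext (by norm_cast at h; omega))
  · rw [← mul_eq_one_iff_eq_inv₀ (hne j)] at h; norm_cast at h; nlinarith
  · rw [inv_eq_iff_eq_inv, ← mul_eq_one_iff_eq_inv₀ (hne j)] at h; norm_cast at h; nlinarith
  · exact congrArg Sum.inr (Fin.ext (by have := Nat.cast_injective (inv_injective h); omega))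

lemma regularTorusEntries_mul_swapHalves (u : Fin n ⊕ Fin n) :
    regularTorusEntries n u * regularTorusEntries n (swapHalves n u) = 1 := by
  rcases u with i | i
  · exact mul_inv_cancel₀ (Nat.cast_ne_zero.2 (by omega))
  · exact inv_mul_cancel₀ (Nat.cast_ne_zero.2 (by omega))

/-- For every `n ≥ 1` there are semisimple elements of `GSO_{2n}(ℂ)` with equal
multipliers which are `GL_{2n}(ℂ)`-conjugate but not `GSO_{2n}(ℂ)`-conjugate. -/
theorem gso_conjugacy_fails (n : ℕ) (hn : 1 ≤ n) :
    ∃ (x y : Mat n ℂ) (ν : ℂ),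
      inGSO n x ν ∧ inGSO n y ν ∧ IsDiagonalizable x ∧ IsDiagonalizable y ∧
      (∃ g : Mat n ℂ, IsUnit g.det ∧ g * x * g⁻¹ = y) ∧
      ¬ (∃ (g : Mat n ℂ) (νg : ℂ), inGSO n g νg ∧ g * x * g⁻¹ = y) := by
  set σ : Perm (Fin n ⊕ Fin n) := swap (.inl ⟨0, hn⟩) (.inr ⟨0, hn⟩)
  have hσ : Commute σ (swapHalves n) := by
    have : swapHalves n * σ * (swapHalves n)⁻¹ = σ := by
      rw [← swap_apply_apply]; exact swap_comm _ _
    exact (mul_inv_eq_iff_eq_mul.1 this).symm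
  set x := diagonal (regularTorusEntries n)
  set P := σ.permMatrix ℂ
  have hx : inGSO n x 1 := inGSO_diagonal one_ne_zero regularTorusEntries_mul_swapHalves
  have hP : inGO n P 1 := inGO_permMatrix hσ
  have hy : inGSO n (P * x * P⁻¹) 1 := by
    refine ⟨?_, by rw [det_conj ((isUnit_iff_isUnit_det P).2 hP.1)]; exact hx.2⟩
    simpa [P, inv_permMatrix] using (hP.mul hx.1).mul (inGO_permMatrix hσ.inv_left)
  refine ⟨x, P * x * P⁻¹, 1, hx, hy, ⟨1, regularTorusEntries n, by simp, by simp [x]⟩,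
    ⟨P, regularTorusEntries n, hP.1, rfl⟩, ⟨P, hP.1, rfl⟩, ?_⟩
  rintro ⟨g, ν, hg, hconj⟩
  have hdet := det_eq_sign_mul_pow_of_conj hσ regularTorusEntries_injective hg.1 hconj
  rw [hg.2, Perm.sign_swap (by simp)] at hdet
  push_cast at hdet
  exact hg.1.2.1 (pow_eq_zero_iff (by omega : n ≠ 0) |>.1 (by linear_combination hdet / 2))
end
end

section
/- Let n ≥ 1 and let k = (k_1, …, k_n) be a regular tuple of integers. Then the centralizer in GSp_{2n}(ℂ) of the set {D_k(w) : w ∈ ℂ×} is exactly the diagonal torus {diag(t_1, …, t_n, t_1^{−1}x, …, t_n^{−1}x) : t_1, …, t_n, x ∈ ℂ×}. -/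
open Matrix

noncomputable section

/-- The standard symplectic form matrix `J_{2n} = [[0, 1], [-1, 0]]`. -/
def Jmat (n : ℕ) : Mat n ℂ := fromBlocks 0 1 (-1) 0

/-- `A ∈ GSp_{2n}(ℂ)` with symplectic multiplier `ν`. -/
def inGSp (n : ℕ) (A : Mat n ℂ) (ν : ℂ) : Prop :=
  IsUnit A.det ∧ ν ≠ 0 ∧ Aᵀ * Jmat n * A = ν • Jmat n

/-- `D_k(w) = diag(w^{k_1}, …, w^{k_n}, w^{-k_1}, …, w^{-k_n})`. -/
def Dk {n : ℕ} (kk : Fin n → ℤ) (w : ℂ) : Mat n ℂ :=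
  Matrix.diagonal (Sum.elim (fun i => w ^ kk i) (fun i => w ^ (-kk i)))

/-- A tuple `(k_1, …, k_n)` of integers is regular if each `k_i` is nonzero and
`k_i ≠ ±k_j` for all `i ≠ j`. -/
def Regular {n : ℕ} (kk : Fin n → ℤ) : Prop :=
  (∀ i, kk i ≠ 0) ∧ ∀ i j, i ≠ j → kk i ≠ kk j ∧ kk i ≠ -kk j

/-!
For regular `k` the `2n` exponents `±k_i` are pairwise distinct, so `D_k(2)` is diagonal with
pairwise distinct entries `2^{±k_i}` and everything commuting with it is diagonal. A diagonal
matrix `diag(a, b)` lies in `GSp_{2n}` with multiplier `ν` exactly when `a_i b_i = ν` for all `i`,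
which describes the torus.
-/

theorem Matrix.eq_diagonal_of_mul_diagonal_eq {ι R : Type*} [Fintype ι] [DecidableEq ι]
    [CommRing R] [NoZeroDivisors R] {A : Matrix ι ι R} {d : ι → R}
    (hd : Function.Injective d) (h : A * diagonal d = diagonal d * A) :
    A = diagonal fun i => A i i := by
  ext i j
  rcases eq_or_ne i j with rfl | hij
  · simp
  · have hij' := congrFun (congrFun h i) j
    rw [mul_diagonal, diagonal_mul] at hij'
    have : (d j - d i) * A i j = 0 := by rw [sub_mul, mul_comm, hij', sub_self]
    simp [diagonal_apply_ne _ hij,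
      (mul_eq_zero.1 this).resolve_left (sub_ne_zero.2 (hd.ne hij.symm))]

theorem Regular.injective_sumElim_neg {n : ℕ} {kk : Fin n → ℤ} (hreg : Regular kk) :
    Function.Injective (Sum.elim kk fun i => -kk i) := by
  obtain ⟨hnz, hpm⟩ := hreg
  have hne : ∀ i j, kk i ≠ -kk j := fun i j hc => by
    rcases eq_or_ne i j with rfl | h
    · exact hnz i (by omega)
    · exact (hpm i j h).2 hc
  rintro (i | i) (j | j) h <;> simp only [Sum.elim_inl, Sum.elim_inr] at h
  · by_contra hij; exact (hpm i j fun e => hij (congrArg _ e)).1 h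
  · exact absurd h (hne i j)
  · exact absurd h.symm (hne j i)
  · by_contra hij; exact (hpm i j fun e => hij (congrArg _ e)).1 (by omega)

theorem Dk_eq_diagonal {n : ℕ} (kk : Fin n → ℤ) (w : ℂ) :
    Dk kk w = diagonal fun i => w ^ Sum.elim kk (fun i => -kk i) i := by
  unfold Dk
  congr 1
  funext i
  cases i <;> rfl

theorem Complex.two_zpow_injective : Function.Injective fun m : ℤ => (2 : ℂ) ^ m := by
  intro m l h
  have h' : ‖(2 : ℂ) ^ m‖ = ‖(2 : ℂ) ^ l‖ := congrArg norm h
  simp only [norm_zpow, Complex.norm_ofNat] at h'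
  exact zpow_right_injective₀ (by norm_num) (by norm_num) h'

theorem transpose_diagonal_mul_Jmat_mul_diagonal {n : ℕ} (a b : Fin n → ℂ) :
    (diagonal (Sum.elim a b))ᵀ * Jmat n * diagonal (Sum.elim a b) =
      fromBlocks 0 (diagonal (a * b)) (-diagonal (a * b)) 0 := by
  rw [diagonal_transpose, ← fromBlocks_diagonal, Jmat, fromBlocks_multiply, fromBlocks_multiply]
  simp [diagonal_mul_diagonal, mul_comm]

theorem inGSp_diagonal_iff {n : ℕ} (a b : Fin n → ℂ) (ν : ℂ) :
    inGSp n (diagonal (Sum.elim a b)) ν ↔ ν ≠ 0 ∧ ∀ i, a i * b i = ν := by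
  have hJ : ν • Jmat n = fromBlocks 0 (diagonal fun _ => ν) (-diagonal fun _ => ν) 0 := by
    simp [Jmat, fromBlocks_smul, smul_one_eq_diagonal]
  have hprod : (∀ i, a i * b i = ν) ↔ diagonal (a * b) = diagonal fun _ => ν := by
    rw [diagonal_injective.eq_iff, funext_iff]
    rfl
  rw [inGSp, transpose_diagonal_mul_Jmat_mul_diagonal, hJ, fromBlocks_inj, hprod]
  refine ⟨fun ⟨_, hν, _, h, _⟩ => ⟨hν, h⟩, fun ⟨hν, h⟩ => ⟨?_, hν, rfl, h, by rw [h], rfl⟩⟩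
  have hab : ∀ i, a i * b i ≠ 0 := fun i => by
    rw [show a i * b i = ν from congrFun (diagonal_injective h) i]
    exact hν
  rw [det_diagonal, Fintype.prod_sum_type, isUnit_iff_ne_zero, ← Finset.prod_mul_distrib]
  exact Finset.prod_ne_zero_iff.2 fun i _ => hab i

theorem centralizer_eq_diagonal_torus_general (n : ℕ) (kk : Fin n → ℤ)
    (hreg : Regular kk) :
    {A : Mat n ℂ | (∃ ν : ℂ, inGSp n A ν) ∧ ∀ w : ℂ, w ≠ 0 → A * Dk kk w = Dk kk w * A}
      = {A : Mat n ℂ | ∃ (t : Fin n → ℂ) (x : ℂ), (∀ i, t i ≠ 0) ∧ x ≠ 0 ∧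
          A = Matrix.diagonal (Sum.elim t (fun i => (t i)⁻¹ * x))} := by
  ext A
  constructor
  · rintro ⟨⟨ν, hA⟩, hcomm⟩
    have h2 := hcomm 2 two_ne_zero
    rw [Dk_eq_diagonal] at h2
    obtain ⟨a, b, rfl⟩ : ∃ a b, A = diagonal (Sum.elim a b) :=
      ⟨_, _, (eq_diagonal_of_mul_diagonal_eq
        (Complex.two_zpow_injective.comp hreg.injective_sumElim_neg) h2).trans
          (by rw [Sum.elim_comp_inl_inr])⟩
    obtain ⟨hν, hab⟩ := (inGSp_diagonal_iff a b ν).1 hA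
    have ha : ∀ i, a i ≠ 0 := fun i => left_ne_zero_of_mul (hab i ▸ hν)
    have hb : b = fun i => (a i)⁻¹ * ν :=
      funext fun i => by rw [← hab i, inv_mul_cancel_left₀ (ha i)]
    exact ⟨a, ν, ha, hν, hb ▸ rfl⟩
  · rintro ⟨t, x, ht, hx, rfl⟩
    refine ⟨⟨x, (inGSp_diagonal_iff _ _ _).2 ⟨hx, fun i => mul_inv_cancel_left₀ (ht i) x⟩⟩,
      fun w _ => (commute_diagonal _ _).eq⟩

/-- The centralizer in `GSp_{2n}(ℂ)` of `{D_k(w) : w ∈ ℂ×}` is exactly the diagonal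
torus `{diag(t_1, …, t_n, t_1⁻¹x, …, t_n⁻¹x)}`. -/
theorem centralizer_eq_diagonal_torus (n : ℕ) (hn : 1 ≤ n) (kk : Fin n → ℤ)
    (hreg : Regular kk) :
    {A : Mat n ℂ | (∃ ν : ℂ, inGSp n A ν) ∧ ∀ w : ℂ, w ≠ 0 → A * Dk kk w = Dk kk w * A}
      = {A : Mat n ℂ | ∃ (t : Fin n → ℂ) (x : ℂ), (∀ i, t i ≠ 0) ∧ x ≠ 0 ∧
          A = Matrix.diagonal (Sum.elim t (fun i => (t i)⁻¹ * x))} :=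
  centralizer_eq_diagonal_torus_general n kk hreg
end
end
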